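/- Let L be a field with a surjective nontrivial valuation w : L* → G onto a linearly ordered abelian group G ≠ {0}, and suppose the residue field of w has exactly q elements. Let x_0 ∈ L, g ∈ G, and let D = { x ∈ L : w(x − x_0) > g } be the open disk of radius g about x_0. Let S ⊆ D be a finite nonempty set, and let m ≥ 1 be an integer such that for every r ∈ D \ S the set { w(α − r) : α ∈ S } has at most m elements. Then S has at most q^{m−1} elements. -/

import Mathlib

/-!
Let `a, b ∈ S` realise the diameter `h = w (a - b)` of `S`. The residue of `(x - a) / (a - b)`
identifies two points of `S` exactly when they lie in a common open disk of radius `h`, so `S`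
splits into at most `q` parts, each the trace of `S` on such a disk. A point `r ∉ S` of one of
these disks is at distance exactly `h` from every point of `S` outside the part and strictly
closer to the points of the part, so the part sees one distance fewer than `S`, and induction
on `m` gives `q ^ (m - 1)`. In the base case the disks are infinite, so when `S` has two points
some `r ∉ S` near `a` already sees two distances, `w (a - r) < h` and `h`.
-/

namespace Valuation

variable {L Γ₀ : Type*} [Field L] [LinearOrderedCommGroupWithZero Γ₀] (w : Valuation L Γ₀)

def openDisk (a : L) (g : Γ₀) : Set L := {x | w (x - a) < g}

def distances (s : Finset L) (r : L) : Finset Γ₀ := s.image fun α => w (α - r)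

variable {w}

@[simp]
theorem mem_openDisk {a x : L} {g : Γ₀} : x ∈ w.openDisk a g ↔ w (x - a) < g := Iff.rfl

theorem map_sub_lt_of_mem_openDisk {a x y : L} {g : Γ₀} (hx : x ∈ w.openDisk a g)
    (hy : y ∈ w.openDisk a g) : w (x - y) < g := by
  simpa using w.map_sub_lt hx hy

theorem openDisk_subset_openDisk {a b : L} {g h : Γ₀} (hb : b ∈ w.openDisk a g)
    (hhg : h ≤ g) : w.openDisk b h ⊆ w.openDisk a g := fun x hx => by
  simpa using w.map_add_lt (lt_of_lt_of_le hx hhg) hb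

variable (w) in
theorem openDisk_infinite [w.IsNontrivial] (a : L) {c : L} (hc : c ≠ 0) :
    (w.openDisk a (w c)).Infinite := by
  obtain ⟨u, hu0, hu1⟩ := IsNontrivial.exists_lt_one (v := w)
  have hwu : 0 < w u := zero_lt_iff.mpr ((map_ne_zero w).mpr hu0)
  refine Set.infinite_of_injective_forall_mem (f := fun k : ℕ => a + c * u ^ (k + 1))
    (fun k l hkl => ?_) (fun k => ?_)
  · have hpow : w u ^ (k + 1) = w u ^ (l + 1) := by
      simpa [map_pow] using congrArg w (mul_left_cancel₀ hc (add_left_cancel hkl))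
    simpa using pow_right_injective₀ hwu hu1.ne hpow
  · simpa [map_pow] using
      mul_lt_of_lt_one_right (zero_lt_iff.mpr ((map_ne_zero w).mpr hc))
        (pow_lt_one₀ zero_le hu1 k.succ_ne_zero)

theorem isNontrivial_of_surjective (hsurj : Function.Surjective w)
    (hnontriv : ∃ γ : Γ₀, γ ≠ 0 ∧ γ ≠ 1) : w.IsNontrivial := by
  obtain ⟨γ, hγ0, hγ1⟩ := hnontriv
  obtain ⟨x, rfl⟩ := hsurj γ
  exact ⟨x, hγ0, hγ1⟩

variable (w) in
/-- Only the values on the closed disk `w (x - a) ≤ w c` matter; `0` outside is a junk value. -/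
noncomputable def residueAt (a c x : L) : IsLocalRing.ResidueField w.valuationSubring :=
  if hx : w ((x - a) / c) ≤ 1 then IsLocalRing.residue _ ⟨(x - a) / c, hx⟩ else 0

theorem residue_eq_residue_iff (x y : w.valuationSubring) :
    IsLocalRing.residue _ x = IsLocalRing.residue _ y ↔ w ((x : L) - y) < 1 := by
  rw [← sub_eq_zero, ← _root_.map_sub, IsLocalRing.residue_eq_zero_iff,
    ValuationSubring.valuation_lt_one_iff,
    ← (isEquiv_valuation_valuationSubring w).lt_one_iff_lt_one]
  rfl

theorem residueAt_eq_residueAt_iff {a c x y : L} (hc : c ≠ 0) (hx : w (x - a) ≤ w c)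
    (hy : w (y - a) ≤ w c) : w.residueAt a c x = w.residueAt a c y ↔ w (x - y) < w c := by
  have hc0 : 0 < w c := zero_lt_iff.mpr ((map_ne_zero w).mpr hc)
  have hx' : w ((x - a) / c) ≤ 1 := by rwa [map_div₀, div_le_one₀ hc0]
  have hy' : w ((y - a) / c) ≤ 1 := by rwa [map_div₀, div_le_one₀ hc0]
  rw [residueAt, residueAt, dif_pos hx', dif_pos hy', residue_eq_residue_iff]
  have : (x - a) / c - (y - a) / c = (x - y) / c := by ring
  simp only [this, map_div₀, div_lt_one₀ hc0]

variable (w) in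
theorem exists_pair_map_sub_eq_max {s : Finset L} (hs : 1 < s.card) :
    ∃ a ∈ s, ∃ b ∈ s, a ≠ b ∧ ∀ x ∈ s, ∀ y ∈ s, w (x - y) ≤ w (a - b) := by
  obtain ⟨x, hx, y, hy, hxy⟩ := Finset.one_lt_card.mp hs
  obtain ⟨⟨a, b⟩, hab, hmax⟩ :=
    (s ×ˢ s).exists_max_image (fun p => w (p.1 - p.2)) ⟨(x, y), Finset.mk_mem_product hx hy⟩
  obtain ⟨ha, hb⟩ := Finset.mem_product.mp hab
  refine ⟨a, ha, b, hb, fun hab => ?_,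
    fun x hx y hy => hmax (x, y) (Finset.mk_mem_product hx hy)⟩
  have := hmax (x, y) (Finset.mk_mem_product hx hy)
  simp only [hab, sub_self, map_zero, le_zero_iff, map_eq_zero, sub_eq_zero] at this
  exact hxy this

section Diameter

variable {s : Finset L} {a b : L}

theorem exists_map_sub_eq_max (ha : a ∈ s) (hb : b ∈ s)
    (hmax : ∀ x ∈ s, ∀ y ∈ s, w (x - y) ≤ w (a - b))
    {a' : L} (ha' : a' ∈ s) : ∃ β ∈ s, w (β - a') = w (a - b) := by
  by_contra! hne
  have hlt : ∀ β ∈ s, w (β - a') < w (a - b) := fun β hβ =>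
    lt_of_le_of_ne (hmax β hβ a' ha') (hne β hβ)
  exact (map_sub_lt_of_mem_openDisk (hlt a ha) (hlt b hb)).ne rfl

theorem card_distances_filter_add_one_le (ha : a ∈ s) (hb : b ∈ s)
    (hmax : ∀ x ∈ s, ∀ y ∈ s, w (x - y) ≤ w (a - b))
    {a' r : L} (ha' : a' ∈ s) (hr : w (r - a') < w (a - b)) :
    (w.distances (s.filter fun x => w (x - a') < w (a - b)) r).card + 1 ≤
      (w.distances s r).card := by
  obtain ⟨β, hβ, hβa'⟩ := exists_map_sub_eq_max ha hb hmax ha'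
  have hβr : w (β - r) = w (a - b) := by
    rw [show β - r = (β - a') - (r - a') by ring, map_sub_eq_of_lt_left _ (hβa' ▸ hr), hβa']
  have hnotMem : w (a - b) ∉ w.distances (s.filter fun x => w (x - a') < w (a - b)) r := by
    simp only [distances, Finset.mem_image, Finset.mem_filter, not_exists, not_and, and_imp]
    intro α _ hα hαr
    rw [show α - r = (α - a') - (r - a') by ring] at hαr
    exact (w.map_sub_lt hα hr).ne hαr
  rw [← Finset.card_insert_of_notMem hnotMem]
  exact Finset.card_le_card <| Finset.insert_subset (Finset.mem_image.mpr ⟨β, hβ, hβr⟩)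
    (Finset.image_subset_image (Finset.filter_subset _ _))

theorem card_distances_filter_le (ha : a ∈ s) (hb : b ∈ s)
    (hmax : ∀ x ∈ s, ∀ y ∈ s, w (x - y) ≤ w (a - b))
    {x₀ : L} {g : Γ₀} {n : ℕ} (hs : ↑s ⊆ w.openDisk x₀ g)
    (hdist : ∀ r ∈ w.openDisk x₀ g \ ↑s, (w.distances s r).card ≤ n + 1)
    {a' : L} (ha' : a' ∈ s) :
    ∀ r ∈ w.openDisk a' (w (a - b)) \ ↑(s.filter fun x => w (x - a') < w (a - b)),
      (w.distances (s.filter fun x => w (x - a') < w (a - b)) r).card ≤ n := by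
  rintro r ⟨hr, hrt⟩
  have hrs : r ∉ s := fun hrs => hrt (Finset.mem_filter.mpr ⟨hrs, hr⟩)
  have hrD : r ∈ w.openDisk x₀ g :=
    openDisk_subset_openDisk (hs ha') (map_sub_lt_of_mem_openDisk (hs ha) (hs hb)).le hr
  have := hdist r ⟨hrD, hrs⟩
  have := card_distances_filter_add_one_le ha hb hmax ha' hr
  omega

theorem card_le_mul_natCard [Finite (IsLocalRing.ResidueField w.valuationSubring)]
    (ha : a ∈ s) (hmax : ∀ x ∈ s, ∀ y ∈ s, w (x - y) ≤ w (a - b)) (hab : a ≠ b)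
    {N : ℕ} (hN : ∀ a' ∈ s, (s.filter fun x => w (x - a') < w (a - b)).card ≤ N) :
    s.card ≤ N * Nat.card (IsLocalRing.ResidueField w.valuationSubring) := by
  classical
  calc s.card ≤ N * (s.image (w.residueAt a (a - b))).card := by
        refine Finset.card_le_mul_card_image _ _ fun β hβ => ?_
        obtain ⟨a', ha', rfl⟩ := Finset.mem_image.mp hβ
        rw [Finset.filter_congr fun x hx => residueAt_eq_residueAt_iff (sub_ne_zero.mpr hab)
          (hmax x hx a ha) (hmax a' ha' a ha)]
        exact hN a' ha'
    _ ≤ N * Nat.card (IsLocalRing.ResidueField w.valuationSubring) := by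
        rw [← Set.ncard_coe_finset]
        exact Nat.mul_le_mul_left _ (Set.ncard_le_card _)

end Diameter

theorem card_le_one_of_card_distances_le_one [w.IsNontrivial] {x₀ : L} {g : Γ₀} {s : Finset L}
    (hs : ↑s ⊆ w.openDisk x₀ g)
    (hdist : ∀ r ∈ w.openDisk x₀ g \ ↑s, (w.distances s r).card ≤ 1) :
    s.card ≤ 1 := by
  by_contra! hs1
  obtain ⟨a, ha, b, hb, hab, hmax⟩ := w.exists_pair_map_sub_eq_max hs1
  obtain ⟨r, hr, hrs⟩ :=
    ((w.openDisk_infinite a (sub_ne_zero.mpr hab)).sdiff s.finite_toSet).nonempty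
  have hempty := card_distances_filter_le ha hb hmax hs (n := 0) hdist ha r
    ⟨hr, fun hrt => hrs (Finset.mem_filter.mp hrt).1⟩
  have haa : a ∈ s.filter fun x => w (x - a) < w (a - b) := Finset.mem_filter.mpr
    ⟨ha, by rwa [sub_self, map_zero, zero_lt_iff, map_ne_zero, sub_ne_zero]⟩
  exact (Finset.card_pos.mpr ⟨_, Finset.mem_image_of_mem _ haa⟩).ne' (Nat.le_zero.mp hempty)

theorem card_le_natCard_pow [w.IsNontrivial] [Finite (IsLocalRing.ResidueField w.valuationSubring)]
    (n : ℕ) {x₀ : L} {g : Γ₀} {s : Finset L} (hs : ↑s ⊆ w.openDisk x₀ g)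
    (hdist : ∀ r ∈ w.openDisk x₀ g \ ↑s, (w.distances s r).card ≤ n + 1) :
    s.card ≤ Nat.card (IsLocalRing.ResidueField w.valuationSubring) ^ n := by
  induction n generalizing x₀ g s with
  | zero => exact card_le_one_of_card_distances_le_one hs hdist
  | succ n ih =>
    rcases le_or_gt s.card 1 with hs1 | hs1
    · exact hs1.trans (Nat.one_le_pow _ _ Nat.card_pos)
    obtain ⟨a, ha, b, hb, hab, hmax⟩ := w.exists_pair_map_sub_eq_max hs1
    rw [pow_succ]
    exact card_le_mul_natCard ha hmax hab fun a' ha' =>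
      ih (fun x hx => (Finset.mem_filter.mp hx).2)
        (card_distances_filter_le ha hb hmax hs hdist ha')

end Valuation

theorem disk_tree_counting_bound_general
    {L : Type*} [Field L]
    {Γ₀ : Type*} [LinearOrderedCommGroupWithZero Γ₀] (w : Valuation L Γ₀)
    (hsurj : Function.Surjective w)
    (hnontriv : ∃ γ : Γ₀, γ ≠ 0 ∧ γ ≠ 1)
    {q : ℕ}
    (hq : Nat.card (IsLocalRing.ResidueField w.valuationSubring) = q)
    (hq0 : 0 < q)
    (x₀ : L) (g : Γ₀)
    (S : Set L) (hSfin : S.Finite)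
    (hSD : S ⊆ {x : L | w (x - x₀) < g})
    {m : ℕ}
    (hdist : ∀ r ∈ {x : L | w (x - x₀) < g} \ S,
        {γ : Γ₀ | ∃ α ∈ S, γ = w (α - r)}.ncard ≤ m) :
    S.ncard ≤ q ^ (m - 1) := by
  have := Valuation.isNontrivial_of_surjective hsurj hnontriv
  have := Nat.finite_of_card_ne_zero (hq ▸ hq0.ne')
  lift S to Finset L using hSfin
  rw [Set.ncard_coe_finset, ← hq]
  refine Valuation.card_le_natCard_pow (m - 1) hSD fun r hr => ?_
  have hdistances : {γ : Γ₀ | ∃ α ∈ (S : Set L), γ = w (α - r)} = w.distances S r := by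
    ext γ
    simp [Valuation.distances, eq_comm]
  have := hdist r hr
  rw [hdistances, Set.ncard_coe_finset] at this
  omega

theorem disk_tree_counting_bound
    {L : Type*} [Field L]
    {Γ₀ : Type*} [LinearOrderedCommGroupWithZero Γ₀] (w : Valuation L Γ₀)
    (hsurj : Function.Surjective w)
    (hnontriv : ∃ γ : Γ₀, γ ≠ 0 ∧ γ ≠ 1)
    {q : ℕ}
    (hq : Nat.card (IsLocalRing.ResidueField w.valuationSubring) = q)
    (hq0 : 0 < q)
    (x₀ : L) (g : Γ₀) (hg : g ≠ 0)
    (S : Set L) (hSfin : S.Finite) (hSne : S.Nonempty)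
    (hSD : S ⊆ {x : L | w (x - x₀) < g})
    {m : ℕ} (hm : 1 ≤ m)
    (hdist : ∀ r ∈ {x : L | w (x - x₀) < g} \ S,
        {γ : Γ₀ | ∃ α ∈ S, γ = w (α - r)}.ncard ≤ m) :
    S.ncard ≤ q ^ (m - 1) :=
  disk_tree_counting_bound_general w hsurj hnontriv hq hq0 x₀ g S hSfin hSD hdist
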